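/- arXiv:2205.09454 — 4 statements merged into one kernel-verified Lean document; each statement's English description precedes it below -/
import Mathlib

section
/- Let V be a real vector space of dimension 2n+2, τ, η ∈ V* linear forms, and ω a skew-symmetric bilinear form on V such that τ ∧ η ∧ ω^n ≠ 0 (i.e. the (2n+2)-multilinear form obtained from τ, η and n copies of ω is a volume form). Then the linear map ♭ : V → V* defined by ♭(v) = τ(v)·τ + ω(v,·) + η(v)·η is a linear isomorphism. -/
/-- The `(2n+2)`-linear alternating "volume" expression built from the 1-forms `τ, η`
and `n` copies of the skew bilinear form `ω` (antisymmetrization of their product). -/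
noncomputable def cowedge (n : ℕ) {V : Type} [AddCommGroup V] [Module ℝ V]
    (τ η : Module.Dual ℝ V) (ω : V →ₗ[ℝ] Module.Dual ℝ V)
    (v : Fin (2 * n + 2) → V) : ℝ :=
  ∑ σ : Equiv.Perm (Fin (2 * n + 2)),
    ((Equiv.Perm.sign σ : ℤ) : ℝ) *
      (τ (v (σ ⟨0, by omega⟩)) * η (v (σ ⟨1, by omega⟩)) *
        ∏ i : Fin n,
          ω (v (σ ⟨2 * (i : ℕ) + 2, by have := i.isLt; omega⟩))
            (v (σ ⟨2 * (i : ℕ) + 3, by have := i.isLt; omega⟩)))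

/-! If `♭ u = 0`, evaluating `♭ u` at `u` gives `τ(u)² + η(u)² = 0` (as `ω(u, u) = 0`), so
`τ u = η u = 0` and then `ω u = 0`. When `u` is one of the arguments, every term of `τ ∧ η ∧ ωⁿ`
contains a factor `τ u`, `η u`, `ω(u, ·)` or `ω(·, u)`, so the form vanishes on every family
containing `u`. If `u ≠ 0`, extending `u` to a basis shows that this top-degree alternating form
vanishes on a basis, hence is zero, contradicting the volume condition. Thus `♭` is injective, and bijective since `dim V = dim V*`. -/

section PairProduct

variable {R V : Type*} [CommSemiring R] [AddCommMonoid V] [Module R V]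

def LinearMap.toMultilinearMapFinTwo (B : V →ₗ[R] V →ₗ[R] R) :
    MultilinearMap R (fun _ : Fin 2 => V) R :=
  LinearMap.uncurryLeft
    ((MultilinearMap.ofSubsingletonₗ (S := R) (ι := Fin 1) R V R 0).toLinearMap ∘ₗ B)

@[simp] theorem LinearMap.toMultilinearMapFinTwo_apply (B : V →ₗ[R] V →ₗ[R] R) (v : Fin 2 → V) :
    B.toMultilinearMapFinTwo v = B (v 0) (v 1) := by
  simp [LinearMap.toMultilinearMapFinTwo, Fin.tail]

def pairProduct {κ : Type*} [Fintype κ] (B : κ → V →ₗ[R] V →ₗ[R] R) :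
    MultilinearMap R (fun _ : Σ _ : κ, Fin 2 => V) R :=
  (MultilinearMap.mkPiAlgebra R κ R).compMultilinearMap fun k => (B k).toMultilinearMapFinTwo

theorem pairProduct_apply {κ : Type*} [Fintype κ] (B : κ → V →ₗ[R] V →ₗ[R] R)
    (v : (Σ _ : κ, Fin 2) → V) :
    pairProduct B v = ∏ k, B k (v ⟨k, 0⟩) (v ⟨k, 1⟩) := by
  simp [pairProduct, Sigma.curry]

theorem pairProduct_eq_zero_of_mem_range {κ : Type*} [Fintype κ] {B : κ → V →ₗ[R] V →ₗ[R] R}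
    {u : V} (hleft : ∀ k, B k u = 0) (hright : ∀ k x, B k x u = 0)
    {v : (Σ _ : κ, Fin 2) → V} (hu : u ∈ Set.range v) : pairProduct B v = 0 := by
  obtain ⟨⟨k, i⟩, rfl⟩ := hu
  rw [pairProduct_apply]
  refine Finset.prod_eq_zero (Finset.mem_univ k) ?_
  fin_cases i
  · exact LinearMap.congr_fun (hleft k) _
  · exact hright k _

end PairProduct

theorem MultilinearMap.alternatization_eq_zero_of_mem_range {R V W ι : Type*} [CommSemiring R]
    [AddCommMonoid V] [Module R V] [AddCommGroup W] [Module R W] [Fintype ι] [DecidableEq ι]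
    {f : MultilinearMap R (fun _ : ι => V) W} {u : V}
    (hf : ∀ v, u ∈ Set.range v → f v = 0) {v : ι → V} (hu : u ∈ Set.range v) :
    MultilinearMap.alternatization f v = 0 := by
  rw [MultilinearMap.alternatization_apply]
  refine Finset.sum_eq_zero fun σ _ => ?_
  have huσ : u ∈ Set.range fun i => v (σ i) := by rwa [← EquivLike.range_comp v σ] at hu
  rw [MultilinearMap.domDomCongr_apply, hf _ huσ, smul_zero]

theorem AlternatingMap.eq_zero_of_forall_mem_range {K E ι : Type*} [Field K] [AddCommGroup E]
    [Module K E] [FiniteDimensional K E] [Fintype ι] [DecidableEq ι]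
    (hdim : Module.finrank K E = Fintype.card ι)
    (f : E [⋀^ι]→ₗ[K] K) {u : E} (hu : u ≠ 0) (hf : ∀ v, u ∈ Set.range v → f v = 0) :
    f = 0 := by
  have hli := (linearIndepOn_singleton_iff K (v := id) (i := u)).mpr hu
  let b₀ := Module.Basis.extend hli
  have hcard : Fintype.card (hli.extend (Set.subset_univ _)) = Fintype.card ι := by
    rw [← Module.finrank_eq_card_basis b₀, hdim]
  let b := b₀.reindex (Fintype.equivOfCardEq hcard)
  have hub : u ∈ Set.range b := by
    rw [Module.Basis.range_reindex, Module.Basis.range_extend]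
    exact hli.subset_extend _ (Set.mem_singleton u)
  simpa [hf _ hub] using f.eq_smul_basis_det b

section Flat

variable {K V : Type*} [CommRing K] [AddCommMonoid V] [Module K V]

def flat (τ η : Module.Dual K V) (ω : V →ₗ[K] Module.Dual K V) : V →ₗ[K] Module.Dual K V :=
  τ.smulRight τ + ω + η.smulRight η

theorem flat_apply (τ η : Module.Dual K V) (ω : V →ₗ[K] Module.Dual K V) (v : V) :
    flat τ η ω v = τ v • τ + ω v + η v • η := rfl

theorem mem_ker_flat [LinearOrder K] [IsStrictOrderedRing K] {τ η : Module.Dual K V}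
    {ω : V →ₗ[K] Module.Dual K V} (hω : ∀ v, ω v v = 0) {u : V} :
    u ∈ LinearMap.ker (flat τ η ω) ↔ τ u = 0 ∧ η u = 0 ∧ ω u = 0 := by
  refine ⟨fun hu => ?_, fun ⟨hτ, hη, hωu⟩ => by simp [flat_apply, hτ, hη, hωu]⟩
  rw [LinearMap.mem_ker, flat_apply] at hu
  have hsq : τ u * τ u + η u * η u = 0 := by
    simpa [hω] using LinearMap.congr_fun hu u
  have hτ : τ u = 0 := by nlinarith [mul_self_nonneg (τ u), mul_self_nonneg (η u)]
  have hη : η u = 0 := by nlinarith [mul_self_nonneg (τ u), mul_self_nonneg (η u)]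
  exact ⟨hτ, hη, by simpa [hτ, hη] using hu⟩

end Flat

def pairIndexEquiv (n : ℕ) : (Σ _ : Fin (n + 1), Fin 2) ≃ Fin (2 * n + 2) :=
  (Equiv.sigmaEquivProd _ _).trans (finProdFinEquiv.trans (finCongr (by ring)))

theorem pairIndexEquiv_apply (n : ℕ) (k : Fin (n + 1)) (j : Fin 2) :
    pairIndexEquiv n ⟨k, j⟩ = ⟨2 * k + j, by omega⟩ := by
  ext; simp [pairIndexEquiv, finProdFinEquiv]; ring

section Cowedge

variable {V : Type} [AddCommGroup V] [Module ℝ V]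

noncomputable def cowedgeTerm (n : ℕ) (τ η : Module.Dual ℝ V) (ω : V →ₗ[ℝ] Module.Dual ℝ V) :
    MultilinearMap ℝ (fun _ : Fin (2 * n + 2) => V) ℝ :=
  (pairProduct (Fin.cons (τ.smulRight η) fun _ => ω)).domDomCongr (pairIndexEquiv n)

theorem cowedge_eq_alternatization (n : ℕ) (τ η : Module.Dual ℝ V)
    (ω : V →ₗ[ℝ] Module.Dual ℝ V) :
    cowedge n τ η ω = ⇑(MultilinearMap.alternatization (cowedgeTerm n τ η ω)) := by
  funext v
  rw [MultilinearMap.alternatization_apply, cowedge]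
  refine Finset.sum_congr rfl fun σ _ => ?_
  rw [MultilinearMap.domDomCongr_apply, cowedgeTerm, MultilinearMap.domDomCongr_apply,
    pairProduct_apply, Fin.prod_univ_succ]
  simp only [Fin.cons_zero, Fin.cons_succ, LinearMap.smulRight_apply, LinearMap.smul_apply,
    smul_eq_mul, Units.smul_def, zsmul_eq_mul, pairIndexEquiv_apply, Fin.val_succ, Fin.val_zero,
    Fin.val_one, mul_add, add_assoc]

theorem cowedgeTerm_eq_zero_of_mem_range {n : ℕ} {τ η : Module.Dual ℝ V}
    {ω : V →ₗ[ℝ] Module.Dual ℝ V} (hskew : ∀ v w : V, ω v w = - ω w v) {u : V}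
    (hτ : τ u = 0) (hη : η u = 0) (hω : ω u = 0) {v : Fin (2 * n + 2) → V}
    (hu : u ∈ Set.range v) : cowedgeTerm n τ η ω v = 0 := by
  rw [cowedgeTerm, MultilinearMap.domDomCongr_apply]
  refine pairProduct_eq_zero_of_mem_range (u := u) (fun k => ?_) (fun k x => ?_) ?_
  · refine Fin.cases ?_ (fun _ => hω) k
    ext; simp [hτ]
  · refine Fin.cases ?_ (fun _ => ?_) k
    · simp [hη]
    · simp [hskew x u, hω]
  · rwa [← EquivLike.range_comp v (pairIndexEquiv n)] at hu

end Cowedge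

/-- On a `(2n+2)`-dimensional real vector space with linear forms `τ, η` and a skew
bilinear form `ω` such that `τ ∧ η ∧ ω^n` is a volume form, the flat map
`♭(v) = τ(v)·τ + ω(v,·) + η(v)·η` is a linear isomorphism. -/
theorem flat_bijective (n : ℕ) (V : Type) [AddCommGroup V] [Module ℝ V]
    [FiniteDimensional ℝ V] (hdim : Module.finrank ℝ V = 2 * n + 2)
    (τ η : Module.Dual ℝ V) (ω : V →ₗ[ℝ] Module.Dual ℝ V)
    (hskew : ∀ v w : V, ω v w = - ω w v)
    (hvol : ∃ v : Fin (2 * n + 2) → V, cowedge n τ η ω v ≠ 0) :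
    Function.Bijective (fun v : V => τ v • τ + ω v + η v • η) := by
  have hinj : Function.Injective (flat τ η ω) := by
    rw [← LinearMap.ker_eq_bot, Submodule.eq_bot_iff]
    intro u hu
    obtain ⟨hτ, hη, hωu⟩ := (mem_ker_flat fun v => by linarith [hskew v v]).1 hu
    by_contra hu0
    obtain ⟨v, hv⟩ := hvol
    have hzero : MultilinearMap.alternatization (cowedgeTerm n τ η ω) = 0 :=
      AlternatingMap.eq_zero_of_forall_mem_range (by simp [hdim]) _ hu0 fun _ =>
        MultilinearMap.alternatization_eq_zero_of_mem_range fun _ =>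
          cowedgeTerm_eq_zero_of_mem_range hskew hτ hη hωu
    exact hv (by rw [cowedge_eq_alternatization, hzero]; rfl)
  exact ⟨hinj, (LinearMap.injective_iff_surjective_of_finrank_eq_finrank
    Subspace.dual_finrank_eq.symm).1 hinj⟩
end

section
/- Let V be a (2n+2)-dimensional vector space with τ, η ∈ V* and ω a skew-symmetric bilinear form, and define ♭ : V → V* by ♭(v) = τ(v)τ + i_vω + η(v)η. Then ker ♭ = ker τ ∩ ker η ∩ ker ω (where ker ω = {v : ω(v,·) = 0}), provided there exist R_s, R_t ∈ V with ♭(R_s) = η and ♭(R_t) = τ. Moreover ker ♭ = (Im ♭)° under the canonical identification V ≅ V**. -/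
/-- Scalar lemma: the linear system forces `x = y = 0`. -/
lemma precocontact_aux (a b c d x y : ℝ)
    (h1 : a * a + b * b = b) (h2 : c * c + d * d = c)
    (h3 : 2 * (a * c) + 2 * (b * d) = a + d)
    (e1 : 2 * (a * x) + 2 * (b * y) = y)
    (e2 : 2 * (c * x) + 2 * (d * y) = x) :
    x = 0 ∧ y = 0 := by
  have hP : (2*b - 1)^2 = 1 - 4*a^2 := by linear_combination 4*h1
  have hQ : (2*c - 1)^2 = 1 - 4*d^2 := by linear_combination 4*h2
  have h3' : d*(2*b - 1) + a*(2*c - 1) = 0 := by linear_combination h3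
  have hD : 4*a*d - (2*b - 1)*(2*c - 1) ≠ 0 := by
    intro h
    have hPQ : (2*b - 1)*(2*c - 1) = 4*a*d := by linarith
    have hQd : (2*c - 1)^2 + 4*d^2 = 1 := by linarith
    have hPa : (2*b - 1)^2 + 4*a^2 = 1 := by linarith
    have ha0 : a * ((2*c - 1)^2 + 4*d^2) = 0 := by
      linear_combination (2*c - 1)*h3' - d*hPQ
    have hd0 : d * ((2*b - 1)^2 + 4*a^2) = 0 := by
      linear_combination (2*b - 1)*h3' - a*hPQ
    have ha : a = 0 := by rw [hQd] at ha0; linarith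
    have hd : d = 0 := by rw [hPa] at hd0; linarith
    nlinarith [hPQ, hP, hQ, ha, hd]
  constructor
  · have hx : (4*a*d - (2*b - 1)*(2*c - 1)) * x = 0 := by
      linear_combination 2*d*e1 - (2*b - 1)*e2
    rcases mul_eq_zero.mp hx with h | h
    · exact absurd h hD
    · exact h
  · have hy : (4*a*d - (2*b - 1)*(2*c - 1)) * y = 0 := by
      linear_combination (2*a)*e2 - (2*c - 1)*e1
    rcases mul_eq_zero.mp hy with h | h
    · exact absurd h hD
    · exact h

/-- Precocontact kernel proposition, pointwise: with `♭(v) = τ(v)τ + i_vω + η(v)η`,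
if there exist Reeb-type vectors `R_s, R_t` with `♭(R_s) = η`, `♭(R_t) = τ`, then
`ker ♭ = ker τ ∩ ker η ∩ ker ω`, and `ker ♭ = (Im ♭)°` under `V ≅ V**`. -/
theorem precocontact_ker_flat (n : ℕ) (V : Type) [AddCommGroup V] [Module ℝ V]
    [FiniteDimensional ℝ V] (hdim : Module.finrank ℝ V = 2 * n + 2)
    (τ η : Module.Dual ℝ V) (ω : V →ₗ[ℝ] Module.Dual ℝ V)
    (hskew : ∀ v w : V, ω v w = - ω w v)
    (Rs Rt : V)
    (hRs : τ Rs • τ + ω Rs + η Rs • η = η)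
    (hRt : τ Rt • τ + ω Rt + η Rt • η = τ) :
    (∀ v : V, τ v • τ + ω v + η v • η = 0 ↔ (τ v = 0 ∧ η v = 0 ∧ ω v = 0)) ∧
    (∀ v : V, τ v • τ + ω v + η v • η = 0 ↔
      ∀ w : V, (τ w • τ + ω w + η w • η) v = 0) := by
  have hRs' : ∀ w : V, τ Rs * τ w + ω Rs w + η Rs * η w = η w := by
    intro w
    have := DFunLike.congr_fun hRs w
    simpa [LinearMap.add_apply, LinearMap.smul_apply, smul_eq_mul] using this
  have hRt' : ∀ w : V, τ Rt * τ w + ω Rt w + η Rt * η w = τ w := by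
    intro w
    have := DFunLike.congr_fun hRt w
    simpa [LinearMap.add_apply, LinearMap.smul_apply, smul_eq_mul] using this
  have hωself : ∀ v : V, ω v v = 0 := fun v => by have := hskew v v; linarith
  have h1 : τ Rs * τ Rs + η Rs * η Rs = η Rs := by
    have := hRs' Rs; have h0 := hωself Rs; linarith
  have h2 : τ Rt * τ Rt + η Rt * η Rt = τ Rt := by
    have := hRt' Rt; have h0 := hωself Rt; linarith
  have h3 : 2 * (τ Rs * τ Rt) + 2 * (η Rs * η Rt) = τ Rs + η Rt := by
    have hA := hRs' Rt
    have hB := hRt' Rs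
    have hC := hskew Rs Rt
    linear_combination hA + hB - hC
  have key : ∀ v : V, τ v • τ + ω v + η v • η = 0 ↔ (τ v = 0 ∧ η v = 0 ∧ ω v = 0) := by
    intro v
    constructor
    · intro h
      have hv : ∀ w : V, τ v * τ w + ω v w + η v * η w = 0 := by
        intro w
        have := DFunLike.congr_fun h w
        simpa [LinearMap.add_apply, LinearMap.smul_apply, smul_eq_mul] using this
      have e1 : 2 * (τ Rs * τ v) + 2 * (η Rs * η v) = η v := by
        have hA := hv Rs
        have hB := hRs' v
        have hC := hskew v Rs
        linear_combination hA + hB - hC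
      have e2 : 2 * (τ Rt * τ v) + 2 * (η Rt * η v) = τ v := by
        have hA := hv Rt
        have hB := hRt' v
        have hC := hskew v Rt
        linear_combination hA + hB - hC
      obtain ⟨hx, hy⟩ := precocontact_aux (τ Rs) (η Rs) (τ Rt) (η Rt) (τ v) (η v)
        h1 h2 h3 e1 e2
      refine ⟨hx, hy, ?_⟩
      have := h
      rw [hx, hy] at this
      simpa using this
    · rintro ⟨h1', h2', h3'⟩
      rw [h1', h2', h3']
      simp
  refine ⟨key, fun v => ?_⟩
  constructor
  · intro h w
    obtain ⟨hx, hy, hω⟩ := (key v).mp h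
    have hwv : ω w v = 0 := by
      have := hskew w v
      rw [this, hω]; simp
    simp [LinearMap.add_apply, LinearMap.smul_apply, smul_eq_mul, hx, hy, hwv]
  · intro h
    have hy : η v = 0 := by have := h Rs; rwa [hRs] at this
    have hx : τ v = 0 := by have := h Rt; rwa [hRt] at this
    have hω : ω v = 0 := by
      ext w
      have hw := h w
      simp only [LinearMap.add_apply, LinearMap.smul_apply, smul_eq_mul, hx, hy,
        mul_zero, add_zero, zero_add] at hw
      rw [hskew v w, hw]; simp
    rw [hx, hy, hω]; simp
end

section
/- For a precocontact Hamiltonian system (M, τ, η, H), a point p ∈ M admits a solution of ♭(X_p) = (γ_H)_p (with γ_H = dH − (L_{R_s}H + H)η + (1 − L_{R_t}H)τ) if and only if (L_Y H)_p = 0 for every section Y of the characteristic distribution C = ker τ ∩ ker η ∩ ker dη. Equivalently, M_1 := {p : (γ_H)_p ∈ ♭(T_pM)} = {p : dH_p vanishes on C_p}. -/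
set_option maxHeartbeats 1000000


/-- Pointwise characterization of the first constraint submanifold of a precocontact
Hamiltonian system: a point admits a solution `X` of `♭(X) = γ_H`, with
`γ_H = dH − (L_{R_s}H + H)η + (1 − L_{R_t}H)τ`, if and only if `dH` vanishes on the
characteristic subspace `C = ker τ ∩ ker η ∩ ker ω`. Here `h = H(p)`, `δ = dH_p`. -/
theorem first_constraint_characterization (V : Type) [AddCommGroup V] [Module ℝ V]
    [FiniteDimensional ℝ V]
    (τ η : Module.Dual ℝ V) (ω : V →ₗ[ℝ] Module.Dual ℝ V)
    (hskew : ∀ v w : V, ω v w = - ω w v)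
    (h : ℝ) (δ : Module.Dual ℝ V)
    (Rt Rs : V)
    (hRt : τ Rt • τ + ω Rt + η Rt • η = τ)
    (hRs : τ Rs • τ + ω Rs + η Rs • η = η) :
    (∃ X : V, τ X • τ + ω X + η X • η
        = δ - (δ Rs + h) • η + (1 - δ Rt) • τ) ↔
      (∀ Y : V, τ Y = 0 → η Y = 0 → ω Y = 0 → δ Y = 0) := by
  classical
  set B : V →ₗ[ℝ] Module.Dual ℝ V := τ.smulRight τ + ω + η.smulRight η with hB
  have hBapp : ∀ X : V, B X = τ X • τ + ω X + η X • η := fun X => rfl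
  set C : Submodule ℝ V := LinearMap.ker τ ⊓ LinearMap.ker η ⊓ LinearMap.ker ω with hC
  constructor
  · rintro ⟨X, hX⟩ Y hτ hη hω
    have hXY := congrArg (fun f => f Y) hX
    have hωXY : ω X Y = 0 := by
      rw [hskew X Y]
      have : ω Y X = 0 := by rw [hω]; rfl
      simp [this]
    simp only [LinearMap.add_apply, LinearMap.sub_apply, LinearMap.smul_apply,
      smul_eq_mul, hτ, hη, hωXY] at hXY
    linarith
  · intro hδ
    -- kernel of B is C
    have hker : LinearMap.ker B = C := by
      apply le_antisymm
      · intro Y hY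
        have hY0 : B Y = 0 := hY
        have hYY := congrArg (fun f => f Y) hY0
        have hωYY : ω Y Y = 0 := by
          have := hskew Y Y; linarith
        simp only [hBapp, LinearMap.add_apply, LinearMap.smul_apply, smul_eq_mul,
          hωYY, LinearMap.zero_apply] at hYY
        have hτY : τ Y = 0 := by nlinarith
        have hηY : η Y = 0 := by nlinarith
        have hωY : ω Y = 0 := by
          have := hBapp Y
          rw [hY0, hτY, hηY] at this
          simpa using this.symm
        exact ⟨⟨hτY, hηY⟩, hωY⟩
      · intro Y hY
        obtain ⟨⟨hτY, hηY⟩, hωY⟩ := hY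
        show B Y = 0
        rw [hBapp, LinearMap.mem_ker.mp hτY, LinearMap.mem_ker.mp hηY,
          LinearMap.mem_ker.mp hωY]
        simp
    -- range of B is contained in annihilator of C
    have hle : LinearMap.range B ≤ C.dualAnnihilator := by
      rintro _ ⟨X, rfl⟩
      rw [Submodule.mem_dualAnnihilator]
      rintro Y ⟨⟨hτY, hηY⟩, hωY⟩
      have hτY : τ Y = 0 := hτY
      have hηY : η Y = 0 := hηY
      have hωY : ω Y = 0 := hωY
      have hωXY : ω X Y = 0 := by
        rw [hskew X Y, hωY]; simp
      simp [hBapp, hτY, hηY, hωXY]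
    -- dimension count gives equality
    have hrank : LinearMap.range B = C.dualAnnihilator := by
      apply Submodule.eq_of_le_of_finrank_le hle
      have h1 := LinearMap.finrank_range_add_finrank_ker B
      have he : Module.finrank ℝ (V ⧸ C) = Module.finrank ℝ C.dualAnnihilator := (Subspace.quotEquivAnnihilator C).finrank_eq
      have hq := Submodule.finrank_quotient_add_finrank C
      rw [hker] at h1
      omega
    -- the target form annihilates C
    have hmem : (δ - (δ Rs + h) • η + (1 - δ Rt) • τ) ∈ C.dualAnnihilator := by
      rw [Submodule.mem_dualAnnihilator]
      rintro Y ⟨⟨hτY, hηY⟩, hωY⟩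
      have hτY : τ Y = 0 := hτY
      have hηY : η Y = 0 := hηY
      have hωY : ω Y = 0 := hωY
      have hδY : δ Y = 0 := hδ Y hτY hηY hωY
      simp [hτY, hηY, hδY]
    rw [← hrank] at hmem
    obtain ⟨X, hX⟩ := hmem
    exact ⟨X, by rw [← hBapp]; exact hX⟩
end

section
/- Let L : ℝ × Tℝ^n × ℝ → ℝ be smooth with everywhere invertible Hessian W_{ij} = ∂²L/∂v^i∂v^j, and let Γ be a vector field of the form Γ = f ∂/∂t + F^i ∂/∂q^i + G^i ∂/∂v^i + g ∂/∂s satisfying the coordinate cocontact Lagrangian equations (eqs. of type (F^j − v^j)W_{ij} = 0, f = 1, L + (∂L/∂v^j)(F^j − v^j) − g = 0, and the Euler–Lagrange-type equation). Then F^i = v^i (Γ is a SODE), g = L, and the G^i satisfy ∂²L/∂t∂v^i + v^j ∂²L/∂q^j∂v^i + G^j ∂²L/∂v^j∂v^i + L ∂²L/∂s∂v^i − ∂L/∂q^i = (∂L/∂s)(∂L/∂v^i). -/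
/-- The phase space `ℝ × Tℝⁿ × ℝ` with coordinates `(t, qⁱ, vⁱ, s)`. -/
abbrev E18 (n : ℕ) : Type := ℝ × (Fin n → ℝ) × (Fin n → ℝ) × ℝ

/-- First-order partial derivative of `f` in the direction `u`. -/
noncomputable def pd {n : ℕ} (f : E18 n → ℝ) (u : E18 n) (x : E18 n) : ℝ :=
  fderiv ℝ f x u

/-- Second-order partial derivative of `f` in directions `u, w`. -/
noncomputable def pd2 {n : ℕ} (f : E18 n → ℝ) (u w : E18 n) (x : E18 n) : ℝ :=
  fderiv ℝ (fun y => fderiv ℝ f y w) x u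

def dt {n : ℕ} : E18 n := (1, 0, 0, 0)
def dq {n : ℕ} (i : Fin n) : E18 n := (0, Pi.single i 1, 0, 0)
def dv {n : ℕ} (i : Fin n) : E18 n := (0, 0, Pi.single i 1, 0)
def ds {n : ℕ} : E18 n := (0, 0, 0, 1)

lemma aux_mulvec (n : ℕ) (M : Matrix (Fin n) (Fin n) ℝ) (h : IsUnit M) (c : Fin n → ℝ)
    (hc : ∀ i, ∑ j, c j * M i j = 0) : ∀ i, c i = 0 := by
  have hinj := Matrix.mulVec_injective_iff_isUnit.2 h
  have hM : M.mulVec c = M.mulVec 0 := by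
    funext i
    simpa [Matrix.mulVec, dotProduct, mul_comm] using hc i
  intro i; exact congrFun (hinj hM) i

/-- If `L` is a smooth Lagrangian on `ℝ × Tℝⁿ × ℝ` with everywhere invertible
Hessian `W_{ij} = ∂²L/∂vⁱ∂vʲ`, and `Γ = f∂t + Fⁱ∂qⁱ + Gⁱ∂vⁱ + g∂s` satisfies the
coordinate cocontact Lagrangian equations, then `Fⁱ = vⁱ` (`Γ` is a SODE), `g = L`,
and the `Gⁱ` satisfy the Herglotz–Euler–Lagrange relation. -/
theorem regular_lagrangian_sode (n : ℕ) (L : E18 n → ℝ) (hL : ContDiff ℝ (⊤ : ℕ∞) L)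
    (hW : ∀ x : E18 n,
      IsUnit (Matrix.of (fun i j : Fin n => pd2 L (dv i) (dv j) x)))
    (f g : E18 n → ℝ) (F G : E18 n → Fin n → ℝ)
    (h1 : ∀ x : E18 n, ∑ j : Fin n, (F x j - x.2.2.1 j) * pd2 L dt (dv j) x = 0)
    (h2 : ∀ (x : E18 n) (i : Fin n),
      f x * pd2 L dt (dv i) x + (∑ j : Fin n, F x j * pd2 L (dq j) (dv i) x)
        + (∑ j : Fin n, G x j * pd2 L (dv j) (dv i) x) + g x * pd2 L ds (dv i) x
        - pd L (dq i) x - (∑ j : Fin n, (F x j - x.2.2.1 j) * pd2 L (dq i) (dv j) x)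
      = pd L ds x * pd L (dv i) x)
    (h3 : ∀ (x : E18 n) (i : Fin n),
      ∑ j : Fin n, (F x j - x.2.2.1 j) * pd2 L (dv i) (dv j) x = 0)
    (h4 : ∀ x : E18 n, ∑ j : Fin n, (F x j - x.2.2.1 j) * pd2 L ds (dv j) x = 0)
    (h5 : ∀ x : E18 n,
      L x + (∑ j : Fin n, pd L (dv j) x * (F x j - x.2.2.1 j)) - g x = 0)
    (h6 : ∀ x : E18 n, f x = 1) :
    ∀ x : E18 n,
      (∀ i : Fin n, F x i = x.2.2.1 i) ∧
      g x = L x ∧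
      (∀ i : Fin n,
        pd2 L dt (dv i) x + (∑ j : Fin n, x.2.2.1 j * pd2 L (dq j) (dv i) x)
          + (∑ j : Fin n, G x j * pd2 L (dv j) (dv i) x) + L x * pd2 L ds (dv i) x
          - pd L (dq i) x
        = pd L ds x * pd L (dv i) x) := by
  intro x
  have hF : ∀ i, F x i = x.2.2.1 i := by
    have h0 := aux_mulvec n _ (hW x) (fun j => F x j - x.2.2.1 j) (fun i => h3 x i)
    intro i; have := h0 i; linarith
  have hzero : ∀ j : Fin n, F x j - x.2.2.1 j = 0 := fun j => by rw [hF j]; ring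
  have hg : g x = L x := by
    have := h5 x
    simp only [hzero, mul_zero, Finset.sum_const_zero] at this
    linarith
  refine ⟨hF, hg, fun i => ?_⟩
  have h := h2 x i
  rw [h6 x, hg] at h
  simp only [hzero, zero_mul, Finset.sum_const_zero, sub_zero, one_mul] at h
  calc pd2 L dt (dv i) x + (∑ j : Fin n, x.2.2.1 j * pd2 L (dq j) (dv i) x)
        + (∑ j : Fin n, G x j * pd2 L (dv j) (dv i) x) + L x * pd2 L ds (dv i) x
        - pd L (dq i) x
      = pd2 L dt (dv i) x + (∑ j : Fin n, F x j * pd2 L (dq j) (dv i) x)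
        + (∑ j : Fin n, G x j * pd2 L (dv j) (dv i) x) + L x * pd2 L ds (dv i) x
        - pd L (dq i) x := by
        congr 4
        exact Finset.sum_congr rfl fun j _ => by rw [hF j]
    _ = pd L ds x * pd L (dv i) x := h
end
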